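/- Let A ∈ ℝ^{m×n}, U ∈ ℝ^{m×k} and V ∈ ℝ^{n×k} have orthonormal columns, S diagonal with positive diagonal, and A V = U S. Suppose also U₁ ∈ ℝ^{m×j}, V₁ ∈ ℝ^{n×j} have orthonormal columns with Uᵀ U₁ = 0 and Vᵀ V₁ = 0, S₁ diagonal, and A_d V₁ = U₁ S₁ where A_d = A − U S Vᵀ. Then the concatenated matrices [U U₁] and [V V₁] have orthonormal columns and A [V V₁] = [U U₁] blkdiag(S, S₁). -/

import Mathlib

namespace Matrix

variable {R : Type*} {m n k j : Type*}

theorem fromCols_transpose_mul_fromCols_eq_one [CommSemiring R] [Fintype m]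
    [DecidableEq k] [DecidableEq j] {U : Matrix m k R} {U₁ : Matrix m j R}
    (hU : Uᵀ * U = 1) (hU₁ : U₁ᵀ * U₁ = 1) (hUU₁ : Uᵀ * U₁ = 0) :
    (fromCols U U₁)ᵀ * fromCols U U₁ = 1 := by
  have hU₁U : U₁ᵀ * U = 0 := by
    rw [← transpose_transpose (U₁ᵀ * U), transpose_mul, transpose_transpose, hUU₁,
      transpose_zero]
  rw [transpose_fromCols, fromRows_mul_fromCols, hU, hU₁, hUU₁, hU₁U, fromBlocks_one]

theorem mul_eq_of_sub_mul_transpose_mul_eq [Ring R] [Fintype n] [Fintype k]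
    {A : Matrix m n R} {U : Matrix m k R} {S : Matrix k k R} {V : Matrix n k R}
    {V₁ : Matrix n j R} {W : Matrix m j R}
    (hVV₁ : Vᵀ * V₁ = 0) (hAd : (A - U * S * Vᵀ) * V₁ = W) : A * V₁ = W := by
  rwa [Matrix.sub_mul, Matrix.mul_assoc, hVV₁, Matrix.mul_zero, sub_zero] at hAd

end Matrix

open Matrix

theorem psvd_accumulation_general (m n k j : ℕ) (A : Matrix (Fin m) (Fin n) ℝ)
    (U : Matrix (Fin m) (Fin k) ℝ) (V : Matrix (Fin n) (Fin k) ℝ)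
    (S : Matrix (Fin k) (Fin k) ℝ)
    (U₁ : Matrix (Fin m) (Fin j) ℝ) (V₁ : Matrix (Fin n) (Fin j) ℝ)
    (S₁ : Matrix (Fin j) (Fin j) ℝ)
    (hU : Uᵀ * U = 1) (hV : Vᵀ * V = 1)
    (hAV : A * V = U * S)
    (hU₁ : U₁ᵀ * U₁ = 1) (hV₁ : V₁ᵀ * V₁ = 1)
    (hUU₁ : Uᵀ * U₁ = 0) (hVV₁ : Vᵀ * V₁ = 0)
    (hAd : (A - U * S * Vᵀ) * V₁ = U₁ * S₁) :
    (fromCols U U₁)ᵀ * fromCols U U₁ = 1 ∧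
    (fromCols V V₁)ᵀ * fromCols V V₁ = 1 ∧
    A * fromCols V V₁ = fromCols U U₁ * fromBlocks S 0 0 S₁ := by
  refine ⟨fromCols_transpose_mul_fromCols_eq_one hU hU₁ hUU₁,
    fromCols_transpose_mul_fromCols_eq_one hV hV₁ hVV₁, ?_⟩
  rw [mul_fromCols, fromCols_mul_fromBlocks, hAV, mul_eq_of_sub_mul_transpose_mul_eq hVV₁ hAd,
    Matrix.mul_zero, Matrix.mul_zero, add_zero, zero_add]

/-- Accumulation step: combining a one-sided PSVD A V = U S with a deflated
one-sided PSVD A_d V₁ = U₁ S₁ (orthogonal to the first) gives the larger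
one-sided PSVD A [V V₁] = [U U₁] blkdiag(S, S₁) with orthonormal columns. -/
theorem psvd_accumulation (m n k j : ℕ) (A : Matrix (Fin m) (Fin n) ℝ)
    (U : Matrix (Fin m) (Fin k) ℝ) (V : Matrix (Fin n) (Fin k) ℝ)
    (S : Matrix (Fin k) (Fin k) ℝ)
    (U₁ : Matrix (Fin m) (Fin j) ℝ) (V₁ : Matrix (Fin n) (Fin j) ℝ)
    (S₁ : Matrix (Fin j) (Fin j) ℝ)
    (hU : Uᵀ * U = 1) (hV : Vᵀ * V = 1)
    (hS : S.IsDiag) (hSpos : ∀ i, 0 < S i i)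
    (hAV : A * V = U * S)
    (hU₁ : U₁ᵀ * U₁ = 1) (hV₁ : V₁ᵀ * V₁ = 1)
    (hUU₁ : Uᵀ * U₁ = 0) (hVV₁ : Vᵀ * V₁ = 0)
    (hS₁ : S₁.IsDiag)
    (hAd : (A - U * S * Vᵀ) * V₁ = U₁ * S₁) :
    (fromCols U U₁)ᵀ * fromCols U U₁ = 1 ∧
    (fromCols V V₁)ᵀ * fromCols V V₁ = 1 ∧
    A * fromCols V V₁ = fromCols U U₁ * fromBlocks S 0 0 S₁ :=
  psvd_accumulation_general m n k j A U V S U₁ V₁ S₁ hU hV hAV hU₁ hV₁ hUU₁ hVV₁ hAd
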